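/- If α ∈ (0,1/2) then every irrational β ∈ [0,1] is of intermediate α-type; moreover, if the continued fraction entries of β are bounded, then β is of intermediate α-type for every α ∈ (0,1). -/

import Mathlib

/-- The Farey map. -/
noncomputable def T1 (x : ℝ) : ℝ := if x ≤ 1/2 then x / (1 - x) else (1 - x) / x

/-- Left inverse branch of the Farey map. -/
noncomputable def g0 (x : ℝ) : ℝ := x / (1 + x)

/-- Right inverse branch of the Farey map. -/
noncomputable def g1 (x : ℝ) : ℝ := 1 / (1 + x)

open scoped Classical in
/-- `F β n = f_{1,ω₁(β)|ₙ}`, the composition of the Farey inverse branches along the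
coding of `β` (where `ω_{1,k}(β) = 1` iff `T₁^{k-1}(β) > 1/2`). -/
noncomputable def F (β : ℝ) : ℕ → ℝ → ℝ
  | 0 => id
  | n + 1 => F β n ∘ (if 1/2 < T1^[n] β then g1 else g0)

/-- Shifted continued fraction numerators: `P a 0 = p₋₁ = 1`, `P a (k+1) = p_k`,
with `p_k = a_k p_{k-1} + p_{k-2}`. -/
def P (a : ℕ → ℕ) : ℕ → ℕ
  | 0 => 1
  | 1 => 0
  | n + 2 => a (n + 1) * P a (n + 1) + P a n

/-- Shifted continued fraction denominators: `Q a 0 = q₋₁ = 0`, `Q a (k+1) = q_k`,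
with `q_k = a_k q_{k-1} + q_{k-2}`. -/
def Q (a : ℕ → ℕ) : ℕ → ℕ
  | 0 => 0
  | 1 => 1
  | n + 2 => a (n + 1) * Q a (n + 1) + Q a n

open scoped Classical in
/-- `m(n)`: the number of indices `ℓ ≤ n` with `T₁^{ℓ-1}(β) > 1/2`. -/
noncomputable def mfun (β : ℝ) (n : ℕ) : ℕ :=
  ((Finset.Icc 1 n).filter (fun ℓ => 1/2 < T1^[ℓ - 1] β)).card

open scoped Classical in
/-- `k(n) = max {ℓ ≤ n : T₁^{ℓ-1}(β) > 1/2}` (with value `0` if no such index exists). -/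
noncomputable def kfun (β : ℝ) (n : ℕ) : ℕ :=
  ((Finset.Icc 1 n).filter (fun ℓ => 1/2 < T1^[ℓ - 1] β)).sup id

/-- The Gauss map. -/
noncomputable def gauss (x : ℝ) : ℝ := 1/x - ⌊1/x⌋

/-- `β` has infinite continued fraction expansion `[0; a 1, a 2, …]`. -/
def HasCF (β : ℝ) (a : ℕ → ℕ) : Prop :=
  ∀ k : ℕ, gauss^[k] β ∈ Set.Ioo (0:ℝ) 1 ∧ (a (k + 1) : ℝ) = ⌊1 / gauss^[k] β⌋

/-- `β = [0; a₁, a₂, …]` is of intermediate `α`-type: for some `ε > 0` the series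
`Σ_{n ≥ 1} Σ_{j=1}^{aₙ} t_{n,j}^{-2(1-α)+ε}` converges, where `t_{n,j} = j q_{n-1} + q_{n-2}`
is the denominator of the intermediate approximant `[0; a₁, …, a_{n-1}, j]`. -/
def IntermediateType (α : ℝ) (a : ℕ → ℕ) : Prop :=
  ∃ ε > (0:ℝ), Summable (fun p : (n : ℕ) × Fin (a (n + 1)) =>
    (((p.2 : ℕ) + 1) * Q a (p.1 + 1) + Q a p.1 : ℝ) ^ (-(2 * (1 - α)) + ε))

/-!
Every partial quotient is at least `1`, so `q_{n+1} ≥ 2 q_{n-1}`: the denominators grow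
geometrically and `Σ q_n^{-s}` converges for every `s > 0`. In the `n`-th block,
`t_{n,j} ≥ j q_{n-1}`, so the block sum is at most `ζ(s) q_{n-1}^{-s}` when `s > 1`, and at most
`a_n q_{n-1}^{-s}` for any `s > 0`. An exponent `s = 2(1-α) - ε > 1` exists exactly when
`α < 1/2`; for bounded entries any `s ∈ (0, 2(1-α))` will do.
-/

lemma HasCF.one_le {β : ℝ} {a : ℕ → ℕ} (ha : HasCF β a) (k : ℕ) : 1 ≤ a (k + 1) := by
  obtain ⟨⟨hx0, hx1⟩, hak⟩ := ha k
  have hfloor : (1 : ℤ) ≤ ⌊1 / gauss^[k] β⌋ :=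
    Int.le_floor.2 (by rw [Int.cast_one, le_div_iff₀ hx0]; linarith)
  have : (1 : ℝ) ≤ a (k + 1) := by rw [hak]; exact_mod_cast hfloor
  exact_mod_cast this

section Denominators

variable {a : ℕ → ℕ} (ha : ∀ k, 1 ≤ a (k + 1))
include ha

lemma Q_le_Q_succ (n : ℕ) : Q a (n + 1) ≤ Q a (n + 2) := by
  show Q a (n + 1) ≤ a (n + 1) * Q a (n + 1) + Q a n
  nlinarith [ha n]

lemma two_mul_Q_le (n : ℕ) : 2 * Q a (n + 1) ≤ Q a (n + 3) := by
  show 2 * Q a (n + 1) ≤ a (n + 2) * Q a (n + 2) + Q a (n + 1)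
  nlinarith [ha (n + 1), Q_le_Q_succ ha n]

lemma one_le_Q (n : ℕ) : 1 ≤ Q a (n + 1) := by
  induction n with
  | zero => rfl
  | succ n ih => exact ih.trans (Q_le_Q_succ ha n)

lemma two_pow_le_Q (m : ℕ) : 2 ^ m ≤ Q a (2 * m + 1) := by
  induction m with
  | zero => rfl
  | succ m ih =>
    calc 2 ^ (m + 1) = 2 * 2 ^ m := by ring
      _ ≤ 2 * Q a (2 * m + 1) := by omega
      _ ≤ Q a (2 * (m + 1) + 1) := two_mul_Q_le ha (2 * m)

lemma summable_Q_rpow_neg {s : ℝ} (hs : 0 < s) :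
    Summable (fun n : ℕ => (Q a (n + 1) : ℝ) ^ (-s)) := by
  have hgeom : Summable (fun m : ℕ => ((2 : ℝ) ^ (-s)) ^ m) :=
    summable_geometric_of_lt_one (by positivity)
      (Real.rpow_lt_one_of_one_lt_of_neg one_lt_two (by linarith))
  have hbound : ∀ m n, 2 ^ m ≤ Q a (n + 1) → (Q a (n + 1) : ℝ) ^ (-s) ≤ ((2 : ℝ) ^ (-s)) ^ m := by
    intro m n h
    rw [Real.rpow_pow_comm zero_le_two]
    exact Real.rpow_le_rpow_of_nonpos (by positivity) (by exact_mod_cast h) (by linarith)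
  refine Summable.even_add_odd ?_ ?_ <;>
    refine hgeom.of_nonneg_of_le (fun _ => by positivity) fun m => hbound m _ ?_
  · exact two_pow_le_Q ha m
  · exact (two_pow_le_Q ha m).trans (Q_le_Q_succ ha _)

lemma summable_sigma_of_sum_le {s C : ℝ} (hs : 0 < s)
    (hC : ∀ n, ∑ j : Fin (a (n + 1)), (((j : ℕ) + 1) * Q a (n + 1) + Q a n : ℝ) ^ (-s)
      ≤ C * (Q a (n + 1) : ℝ) ^ (-s)) :
    Summable (fun p : (n : ℕ) × Fin (a (n + 1)) =>
      (((p.2 : ℕ) + 1) * Q a (p.1 + 1) + Q a p.1 : ℝ) ^ (-s)) := by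
  rw [summable_sigma_of_nonneg fun _ => by positivity]
  refine ⟨fun _ => .of_finite, ?_⟩
  refine ((summable_Q_rpow_neg ha hs).mul_left C).of_nonneg_of_le
    (fun _ => tsum_nonneg fun _ => by positivity) fun n => ?_
  rw [tsum_fintype]
  exact hC n

lemma intermediateType_of_sum_le {α s C : ℝ} (hs : 0 < s) (hsα : s < 2 * (1 - α))
    (hC : ∀ n, ∑ j : Fin (a (n + 1)), (((j : ℕ) + 1) * Q a (n + 1) + Q a n : ℝ) ^ (-s)
      ≤ C * (Q a (n + 1) : ℝ) ^ (-s)) :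
    IntermediateType α a := by
  refine ⟨2 * (1 - α) - s, by linarith, ?_⟩
  rw [show -(2 * (1 - α)) + (2 * (1 - α) - s) = -s by ring]
  exact summable_sigma_of_sum_le ha hs hC

end Denominators

lemma sum_rpow_neg_le_card_mul (N : ℕ) {q r s : ℝ} (hq : 0 < q) (hr : 0 ≤ r) (hs : 0 ≤ s) :
    ∑ j : Fin N, (((j : ℕ) + 1) * q + r) ^ (-s) ≤ N * q ^ (-s) := by
  calc ∑ j : Fin N, (((j : ℕ) + 1) * q + r) ^ (-s)
      ≤ ∑ _j : Fin N, q ^ (-s) := Finset.sum_le_sum fun j _ =>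
        Real.rpow_le_rpow_of_nonpos hq (by nlinarith [(j : ℕ).cast_nonneg (α := ℝ)]) (by linarith)
    _ = N * q ^ (-s) := by simp

lemma sum_rpow_neg_le_tsum_mul (N : ℕ) {q r s : ℝ} (hq : 0 < q) (hr : 0 ≤ r) (hs : 1 < s) :
    ∑ j : Fin N, (((j : ℕ) + 1) * q + r) ^ (-s)
      ≤ (∑' j : ℕ, ((j : ℝ) + 1) ^ (-s)) * q ^ (-s) := by
  have hsum : Summable (fun j : ℕ => ((j : ℝ) + 1) ^ (-s)) := by
    simpa using (summable_nat_add_iff 1).2 (Real.summable_nat_rpow.2 (by linarith : -s < -1))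
  calc ∑ j : Fin N, (((j : ℕ) + 1) * q + r) ^ (-s)
      ≤ ∑ j : Fin N, (((j : ℕ) + 1 : ℝ) ^ (-s) * q ^ (-s)) := Finset.sum_le_sum fun j _ => by
        rw [← Real.mul_rpow (by positivity) hq.le]
        exact Real.rpow_le_rpow_of_nonpos (by positivity) (by linarith) (by linarith)
    _ = (∑ j ∈ Finset.range N, ((j : ℝ) + 1) ^ (-s)) * q ^ (-s) := by
        rw [← Finset.sum_mul, Fin.sum_univ_eq_sum_range (fun j => ((j : ℝ) + 1) ^ (-s))]
    _ ≤ (∑' j : ℕ, ((j : ℝ) + 1) ^ (-s)) * q ^ (-s) := by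
        gcongr
        exact hsum.sum_le_tsum _ fun _ _ => by positivity

lemma intermediateType_of_lt_half {a : ℕ → ℕ} (ha : ∀ k, 1 ≤ a (k + 1)) {α : ℝ} (hα : α < 1 / 2) :
    IntermediateType α a :=
  intermediateType_of_sum_le ha (s := 3 / 2 - α) (by linarith) (by linarith) fun n =>
    sum_rpow_neg_le_tsum_mul _ (by exact_mod_cast one_le_Q ha n) (Nat.cast_nonneg _) (by linarith)

lemma intermediateType_of_bounded {a : ℕ → ℕ} (ha : ∀ k, 1 ≤ a (k + 1)) {B : ℕ}
    (hB : ∀ n, 1 ≤ n → a n ≤ B) {α : ℝ} (hα : α < 1) :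
    IntermediateType α a :=
  intermediateType_of_sum_le ha (s := 1 - α) (C := B) (by linarith) (by linarith) fun n =>
    (sum_rpow_neg_le_card_mul _ (by exact_mod_cast one_le_Q ha n) (Nat.cast_nonneg _)
      (by linarith)).trans <| by
      gcongr
      exact hB (n + 1) n.succ_pos

theorem stmt_10_general (β : ℝ)
    (a : ℕ → ℕ) (ha : HasCF β a) :
    (∀ α ∈ Set.Ioo (0:ℝ) (1/2), IntermediateType α a) ∧
    ((∃ B : ℕ, ∀ n : ℕ, 1 ≤ n → a n ≤ B) → ∀ α ∈ Set.Ioo (0:ℝ) 1, IntermediateType α a) :=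
  ⟨fun _ hα => intermediateType_of_lt_half ha.one_le hα.2,
    fun ⟨_, hB⟩ _ hα => intermediateType_of_bounded ha.one_le hB hα.2⟩

theorem stmt_10 (β : ℝ) (hβ : β ∈ Set.Icc (0:ℝ) 1) (hirr : Irrational β)
    (a : ℕ → ℕ) (ha : HasCF β a) :
    (∀ α ∈ Set.Ioo (0:ℝ) (1/2), IntermediateType α a) ∧
    ((∃ B : ℕ, ∀ n : ℕ, 1 ≤ n → a n ≤ B) → ∀ α ∈ Set.Ioo (0:ℝ) 1, IntermediateType α a) :=
  stmt_10_general β a ha
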